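/- arXiv:1704.06185 — 3 statements merged into one kernel-verified Lean document; each statement's English description precedes it below -/
import Mathlib

section
/- Let d ≥ 36 be an integer and δ ∈ [0, 1/2]. Let S ⊆ {0,1}^d be any subset with |S| ≥ (1/2 + δ)·2^d. Then (1/(d·2^{d−1})) · Σ_{x ∈ S} wt(x) ≥ 1/2 + δ − 3/√d, where wt(x) is the Hamming weight of x. -/
/-!
Write the Hamming weight as `wt x = (d + s x) / 2`, where `s x = ∑ⱼ ±1` is the total spin.
Spins of distinct coordinates are orthogonal over the cube (flipping one coordinate is an
involution negating the product), so `∑ s = 0` and `∑ s² = d 2^d`. Cauchy–Schwarz then gives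
`∑ |s| ≤ 2^d √d`, and since `s` sums to zero, its sum over any `S` is at least `-2^d √d`.
Hence `∑_S wt ≥ (d |S| - 2^d √d) / 2`, which is the claim even with `1/√d` in place of `3/√d`.
-/

open Finset

lemma neg_sum_abs_le_sum_of_sum_eq_zero {ι : Type*} [Fintype ι] [DecidableEq ι] {f : ι → ℝ}
    (hf : ∑ i, f i = 0) (s : Finset ι) : -∑ i, |f i| ≤ ∑ i ∈ s, f i := by
  have h1 : ∑ i ∈ sᶜ, f i ≤ ∑ i ∈ sᶜ, |f i| := sum_le_sum fun i _ => le_abs_self _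
  have h2 : ∑ i ∈ sᶜ, |f i| ≤ ∑ i, |f i| :=
    sum_le_sum_of_subset_of_nonneg (subset_univ _) fun i _ _ => abs_nonneg _
  linarith [sum_add_sum_compl s f]

namespace Hypercube

variable {d : ℕ}

def spin (b : Bool) : ℝ := if b then 1 else -1

lemma spin_not (b : Bool) : spin (!b) = -spin b := by cases b <;> simp [spin]

lemma spin_mul_self (b : Bool) : spin b * spin b = 1 := by cases b <;> simp [spin]

def flipAt (j : Fin d) : Equiv.Perm (Fin d → Bool) :=
  Function.Involutive.toPerm (fun x => Function.update x j (!x j)) fun x => by simp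

lemma flipAt_apply_self (j : Fin d) (x : Fin d → Bool) : flipAt j x j = !x j :=
  Function.update_self ..

lemma flipAt_apply_of_ne {j k : Fin d} (h : k ≠ j) (x : Fin d → Bool) : flipAt j x k = x k :=
  Function.update_of_ne h ..

lemma sum_eq_zero_of_flipAt_neg (j : Fin d) {F : (Fin d → Bool) → ℝ}
    (hF : ∀ x, F (flipAt j x) = -F x) : ∑ x, F x = 0 := by
  have h := Equiv.sum_comp (flipAt j) F
  simp only [hF, sum_neg_distrib] at h
  linarith

lemma sum_spin_mul_spin (j k : Fin d) :
    ∑ x : Fin d → Bool, spin (x j) * spin (x k) = if j = k then 2 ^ d else 0 := by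
  split_ifs with hjk
  · simp [hjk, spin_mul_self]
  · refine sum_eq_zero_of_flipAt_neg j fun x => ?_
    rw [flipAt_apply_self, flipAt_apply_of_ne (Ne.symm hjk), spin_not, neg_mul]

lemma sum_spin (j : Fin d) : ∑ x : Fin d → Bool, spin (x j) = 0 :=
  sum_eq_zero_of_flipAt_neg j fun x => by rw [flipAt_apply_self, spin_not]

def totalSpin (x : Fin d → Bool) : ℝ := ∑ j, spin (x j)

lemma totalSpin_eq (x : Fin d → Bool) :
    totalSpin x = 2 * (#{j | x j = true} : ℝ) - d := by
  have h : ∀ j, spin (x j) = 2 * (if x j = true then 1 else 0) - 1 := by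
    intro j; cases x j <;> norm_num [spin]
  simp only [totalSpin, h, sum_sub_distrib, ← mul_sum, sum_boole, sum_const, card_univ,
    Fintype.card_fin, nsmul_eq_mul, mul_one]

lemma sum_totalSpin : ∑ x : Fin d → Bool, totalSpin x = 0 := by
  unfold totalSpin
  rw [sum_comm]
  exact sum_eq_zero fun j _ => sum_spin j

lemma sum_totalSpin_sq : ∑ x : Fin d → Bool, totalSpin x ^ 2 = d * 2 ^ d := by
  simp only [totalSpin, sq, sum_mul_sum]
  rw [sum_comm]
  simp [sum_comm (γ := Fin d → Bool), sum_spin_mul_spin]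

lemma sum_abs_totalSpin_le : ∑ x : Fin d → Bool, |totalSpin x| ≤ 2 ^ d * √d := by
  calc ∑ x : Fin d → Bool, |totalSpin x| ≤ √(2 ^ d) * (√d * √(2 ^ d)) := by
        simpa [sum_totalSpin_sq, mul_comm] using
          Real.sum_mul_le_sqrt_mul_sqrt univ (fun x : Fin d → Bool => |totalSpin x|) 1
    _ = 2 ^ d * √d := by rw [mul_left_comm, Real.mul_self_sqrt (by positivity), mul_comm]

lemma card_mul_sub_le_two_mul_sum_weight (S : Finset (Fin d → Bool)) :
    d * (#S : ℝ) - 2 ^ d * √d ≤ 2 * ∑ x ∈ S, (#{j | x j = true} : ℝ) := by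
  have h := (neg_sum_abs_le_sum_of_sum_eq_zero sum_totalSpin S).trans'
    (neg_le_neg sum_abs_totalSpin_le)
  simp only [totalSpin_eq, sum_sub_distrib, sum_const, nsmul_eq_mul, ← mul_sum] at h
  linarith

end Hypercube

theorem stmt_8_general (d : ℕ) (hd : 36 ≤ d) (δ : ℝ)
    (S : Finset (Fin d → Bool))
    (hS : (1 / 2 + δ) * 2 ^ d ≤ (S.card : ℝ)) :
    1 / 2 + δ - 3 / Real.sqrt d ≤
      (1 / ((d : ℝ) * 2 ^ (d - 1))) *
        ∑ x ∈ S, ((Finset.univ.filter (fun j => x j = true)).card : ℝ) := by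
  have hd0 : (0 : ℝ) < d := by norm_cast; omega
  have hsqrt : √d * √d = d := Real.mul_self_sqrt hd0.le
  have hpow : (2 : ℝ) ^ d = 2 * 2 ^ (d - 1) := by rw [← pow_succ']; congr 1; omega
  have h3 : 3 / √d * d = 3 * √d := by
    rw [div_mul_eq_mul_div, div_eq_iff (by positivity), mul_assoc, hsqrt]
  have hS' := mul_le_mul_of_nonneg_left hS hd0.le
  have hB : 0 ≤ (2 : ℝ) ^ d * √d := by positivity
  rw [one_div_mul_eq_div, le_div_iff₀ (by positivity)]
  calc (1 / 2 + δ - 3 / √d) * (d * 2 ^ (d - 1))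
      = (d * ((1 / 2 + δ) * 2 ^ d) - 3 * (2 ^ d * √d)) / 2 := by
        rw [hpow]; linear_combination (-(2 : ℝ) ^ (d - 1)) * h3
    _ ≤ (d * #S - 2 ^ d * √d) / 2 := by linarith
    _ ≤ _ := by linarith [Hypercube.card_mul_sub_le_two_mul_sum_weight S]

/-- Hypercube averaging: if S ⊆ {0,1}^d has |S| ≥ (1/2+δ)·2^d with d ≥ 36 and
    δ ∈ [0,1/2], then the average Hamming weight satisfies
    (1/(d·2^{d−1})) Σ_{x∈S} wt(x) ≥ 1/2 + δ − 3/√d. -/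
theorem stmt_8 (d : ℕ) (hd : 36 ≤ d) (δ : ℝ) (hδ0 : 0 ≤ δ) (hδ1 : δ ≤ 1 / 2)
    (S : Finset (Fin d → Bool))
    (hS : (1 / 2 + δ) * 2 ^ d ≤ (S.card : ℝ)) :
    1 / 2 + δ - 3 / Real.sqrt d ≤
      (1 / ((d : ℝ) * 2 ^ (d - 1))) *
        ∑ x ∈ S, ((Finset.univ.filter (fun j => x j = true)).card : ℝ) :=
  stmt_8_general d hd δ S hS
end

section
/- For any μ ∈ (0, 1] and α > 0 with (1+α)μ ≤ 1, the binary relative entropy satisfies D((1+α)μ ‖ μ) ≥ (1/2)·α·log₂(1+α)·μ, where D(δ‖μ) = δ log₂(δ/μ) + (1−δ) log₂((1−δ)/(1−μ)). -/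
/-!
The first term of `D((1+α)μ ‖ μ)` equals `(1+α) μ log₂(1+α)`, and the second is at least `-αμ`
(Gibbs' inequality `b log(b/a) ≥ b - a`). The claim then reduces to `α ≤ (1 + α/2) log(1+α)`,
which holds at `α = 0` and whose difference has derivative `(log(1+α) - α/(1+α))/2 ≥ 0`.
-/

open Real Set

lemma le_one_add_half_mul_log_one_add {x : ℝ} (hx : 0 ≤ x) : x ≤ (1 + x / 2) * log (1 + x) := by
  let f : ℝ → ℝ := fun y => (1 + y / 2) * log (1 + y) - y
  have hf' : ∀ y, 0 ≤ y → HasDerivAt f ((log (1 + y) - y / (1 + y)) / 2) y := by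
    intro y hy
    have hy1 : 1 + y ≠ 0 := by positivity
    have hlog : HasDerivAt (fun z => log (1 + z)) (1 / (1 + y)) y := by
      simpa using ((hasDerivAt_id y).const_add 1).log hy1
    refine ((((hasDerivAt_id' y).div_const 2).const_add 1).mul hlog).sub (hasDerivAt_id' y)
      |>.congr_deriv ?_
    field_simp
    ring
  have hmono : MonotoneOn f (Ici 0) := by
    refine monotoneOn_of_hasDerivWithinAt_nonneg (convex_Ici 0)
      (fun y hy => (hf' y hy).continuousAt.continuousWithinAt)
      (fun y hy => (hf' y (interior_subset hy)).hasDerivWithinAt) fun y hy => ?_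
    have hy : 0 ≤ y := interior_subset hy
    have hlog := one_sub_inv_le_log_of_pos (show 0 < 1 + y by positivity)
    have : 1 - (1 + y)⁻¹ = y / (1 + y) := by field_simp; ring
    linarith
  simpa [f] using hmono self_mem_Ici (mem_Ici.2 hx) hx

lemma sub_le_mul_log_div {a b : ℝ} (ha : 0 < a) (hb : 0 ≤ b) : b - a ≤ b * log (b / a) := by
  rcases hb.eq_or_lt with rfl | hb
  · simpa using ha.le
  have hlog := one_sub_inv_le_log_of_pos (div_pos hb ha)
  rw [inv_div] at hlog
  have := mul_le_mul_of_nonneg_left hlog hb.le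
  rwa [mul_sub, mul_one, mul_div_cancel₀ _ hb.ne'] at this

lemma half_mul_log_one_add_mul_le_binaryKL {μ α : ℝ} (hμ0 : 0 ≤ μ) (hμ1 : μ < 1) (hα : 0 ≤ α)
    (h : (1 + α) * μ ≤ 1) :
    1 / 2 * α * log (1 + α) * μ ≤
      (1 + α) * μ * log (1 + α) +
        (1 - (1 + α) * μ) * log ((1 - (1 + α) * μ) / (1 - μ)) := by
  have hsecond := sub_le_mul_log_div (sub_pos.2 hμ1) (sub_nonneg.2 h)
  have hkey := mul_le_mul_of_nonneg_left (le_one_add_half_mul_log_one_add hα) hμ0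
  linarith

theorem stmt_11_general (μ α : ℝ) (hμ0 : 0 < μ) (hα : 0 < α)
    (h : (1 + α) * μ ≤ 1) :
    (1 / 2) * α * Real.logb 2 (1 + α) * μ ≤
      (1 + α) * μ * Real.logb 2 ((1 + α) * μ / μ) +
        (1 - (1 + α) * μ) * Real.logb 2 ((1 - (1 + α) * μ) / (1 - μ)) := by
  have hμ1 : μ < 1 := by nlinarith
  rw [mul_div_cancel_right₀ _ hμ0.ne']
  have hnat := div_le_div_of_nonneg_right
    (half_mul_log_one_add_mul_le_binaryKL hμ0.le hμ1 hα.le h) (log_nonneg one_le_two)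
  simp only [logb]
  calc _ = _ := by ring
    _ ≤ _ := hnat
    _ = _ := by ring

/-- For μ ∈ (0,1], α > 0 with (1+α)μ ≤ 1:
    D((1+α)μ ‖ μ) ≥ (1/2)·α·log₂(1+α)·μ. -/
theorem stmt_11 (μ α : ℝ) (hμ0 : 0 < μ) (hμ1 : μ ≤ 1) (hα : 0 < α)
    (h : (1 + α) * μ ≤ 1) :
    (1 / 2) * α * Real.logb 2 (1 + α) * μ ≤
      (1 + α) * μ * Real.logb 2 ((1 + α) * μ / μ) +
        (1 - (1 + α) * μ) * Real.logb 2 ((1 - (1 + α) * μ) / (1 - μ)) :=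
  stmt_11_general μ α hμ0 hα h
end

section
/- Let X₁, …, X_n be Boolean random variables, and suppose there exists λ > 0 such that for every subset S ⊆ [n], Pr[∧_{i∈S} X_i = 1] ≤ λ·2^{−|S|}. Then for every α ∈ [0, 1/2], Pr[Σ_{i=1}^n X_i ≥ (1/2 + α)n] ≤ λ·2^{−n·D(1/2+α ‖ 1/2)}, where D(δ‖μ) is the binary relative entropy in bits. -/
/-!
Work with a conjunction bound `λ δ ^ #S` and a threshold `γ n`, `δ ≤ γ ≤ 1`. Write `T ω` for
the set of coordinates equal to `true` and fix `t ∈ (0, 1]`. Expanding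
`t ^ #(T ω)ᶜ = ∏ i, ((1 - t) • [i ∈ T ω] + t)` writes this weight as a nonnegative
combination of the indicators of the conjunction events `S ⊆ T ω`, so the hypothesis bounds
its expectation by `λ (t + (1 - t) δ) ^ n`. Markov's inequality then bounds the upper tail by
`λ (t + (1 - t) δ) ^ n / t ^ ((1 - γ) n)`, and the choice `t = δ (1 - γ) / (γ (1 - δ))` turns
this into `λ 2 ^ (-n D(γ ‖ δ))`. The case `γ = 1` (where this `t` vanishes) is the
hypothesis for `S = univ`.
-/

open Finset Real

noncomputable def binaryRelEntropy (γ δ : ℝ) : ℝ :=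
  γ * logb 2 (γ / δ) + (1 - γ) * logb 2 ((1 - γ) / (1 - δ))

theorem two_rpow_neg_mul_binaryRelEntropy {γ δ : ℝ} (N : ℝ) (hγ0 : 0 < γ) (hγ1 : γ < 1)
    (hδ0 : 0 < δ) (hδ1 : δ < 1) :
    (2 : ℝ) ^ (-N * binaryRelEntropy γ δ) =
      (δ / γ) ^ (γ * N) * ((1 - δ) / (1 - γ)) ^ ((1 - γ) * N) := by
  have hγ1' : 0 < 1 - γ := sub_pos.2 hγ1
  have hδ1' : 0 < 1 - δ := sub_pos.2 hδ1
  rw [rpow_def_of_pos two_pos, rpow_def_of_pos (by positivity), rpow_def_of_pos (by positivity),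
    ← exp_add, binaryRelEntropy, logb, logb, log_div hγ0.ne' hδ0.ne', log_div hδ0.ne' hγ0.ne',
    log_div hγ1'.ne' hδ1'.ne', log_div hδ1'.ne' hγ1'.ne']
  congr 1
  have : log 2 ≠ 0 := (log_pos one_lt_two).ne'
  field_simp
  ring

theorem two_rpow_neg_mul_binaryRelEntropy_one {δ : ℝ} (N : ℝ) (hδ : 0 < δ) :
    (2 : ℝ) ^ (-N * binaryRelEntropy 1 δ) = δ ^ N := by
  rw [binaryRelEntropy, sub_self, zero_mul, add_zero, one_mul, one_div, logb_inv, neg_mul_neg,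
    mul_comm, rpow_mul zero_le_two, rpow_logb two_pos one_lt_two.ne' hδ]

theorem Finset.pow_card_compl_eq_sum_powerset {ι R : Type*} [Fintype ι] [DecidableEq ι]
    [CommRing R] (t : R) (T : Finset ι) :
    t ^ Tᶜ.card = ∑ S ∈ T.powerset, (1 - t) ^ S.card * t ^ Sᶜ.card := by
  have hT := card_le_univ T
  calc t ^ Tᶜ.card = (1 - t + t) ^ T.card * t ^ Tᶜ.card := by simp
    _ = ∑ S ∈ T.powerset, (1 - t) ^ S.card * t ^ (T.card - S.card) * t ^ Tᶜ.card := by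
      rw [← sum_pow_mul_eq_add_pow, sum_mul]
    _ = _ := sum_congr rfl fun S hS => by
      have hST := card_le_card (mem_powerset.1 hS)
      rw [mul_assoc, ← pow_add, card_compl, card_compl]
      congr 2
      omega

section Tail

variable {Ω ι : Type*} [Fintype Ω] [Fintype ι] [DecidableEq ι]
  {p : Ω → ℝ} {T : Ω → Finset ι} {lam δ γ t : ℝ}

theorem sum_mul_pow_card_compl_le
    (hconj : ∀ S, ∑ ω ∈ univ.filter (fun ω => S ⊆ T ω), p ω ≤ lam * δ ^ S.card)
    (ht0 : 0 ≤ t) (ht1 : t ≤ 1) :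
    ∑ ω, p ω * t ^ (T ω)ᶜ.card ≤ lam * (t + (1 - t) * δ) ^ Fintype.card ι := by
  calc ∑ ω, p ω * t ^ (T ω)ᶜ.card
      = ∑ ω, ∑ S ∈ (T ω).powerset, p ω * ((1 - t) ^ S.card * t ^ Sᶜ.card) :=
        sum_congr rfl fun ω _ => by rw [pow_card_compl_eq_sum_powerset, mul_sum]
    _ = ∑ S : Finset ι, ∑ ω ∈ univ.filter (fun ω => S ⊆ T ω),
          p ω * ((1 - t) ^ S.card * t ^ Sᶜ.card) :=
        sum_comm' fun ω S => by simp
    _ = ∑ S : Finset ι, (1 - t) ^ S.card * t ^ Sᶜ.card *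
          ∑ ω ∈ univ.filter (fun ω => S ⊆ T ω), p ω := by
        simp_rw [mul_sum, mul_comm]
    _ ≤ ∑ S : Finset ι, (1 - t) ^ S.card * t ^ Sᶜ.card * (lam * δ ^ S.card) :=
        sum_le_sum fun S _ => mul_le_mul_of_nonneg_left (hconj S)
          (mul_nonneg (pow_nonneg (sub_nonneg.2 ht1) _) (pow_nonneg ht0 _))
    _ = lam * ∑ S ∈ (univ : Finset ι).powerset,
          ((1 - t) * δ) ^ S.card * t ^ ((univ : Finset ι).card - S.card) := by
        simp_rw [powerset_univ, mul_sum, card_compl, card_univ, mul_pow]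
        exact sum_congr rfl fun S _ => by ring
    _ = lam * (t + (1 - t) * δ) ^ Fintype.card ι := by
        rw [sum_pow_mul_eq_add_pow, card_univ, add_comm]

theorem sum_filter_mul_rpow_le (hp : ∀ ω, 0 ≤ p ω) (ht0 : 0 ≤ t) (ht1 : t ≤ 1) :
    (∑ ω ∈ univ.filter (fun ω => γ * Fintype.card ι ≤ (T ω).card), p ω) *
        t ^ ((1 - γ) * Fintype.card ι) ≤ ∑ ω, p ω * t ^ (T ω)ᶜ.card := by
  rw [sum_mul]
  refine (sum_le_sum fun ω hω => mul_le_mul_of_nonneg_left ?_ (hp ω)).trans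
    (sum_le_sum_of_subset_of_nonneg (filter_subset _ _) fun ω _ _ =>
      mul_nonneg (hp ω) (pow_nonneg ht0 _))
  rw [← rpow_natCast]
  refine rpow_le_rpow_of_exponent_ge' ht0 ht1 (Nat.cast_nonneg _) ?_
  rw [card_compl, Nat.cast_sub (card_le_univ _)]
  linarith [(mem_filter.1 hω).2]

theorem sum_filter_card_le_of_conj_le_of_lt_one (hp : ∀ ω, 0 ≤ p ω)
    (hconj : ∀ S, ∑ ω ∈ univ.filter (fun ω => S ⊆ T ω), p ω ≤ lam * δ ^ S.card)
    (hδ : 0 < δ) (hδγ : δ ≤ γ) (hγ : γ < 1) :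
    ∑ ω ∈ univ.filter (fun ω => γ * Fintype.card ι ≤ (T ω).card), p ω ≤
      lam * 2 ^ (-(Fintype.card ι : ℝ) * binaryRelEntropy γ δ) := by
  have hγ0 : 0 < γ := hδ.trans_le hδγ
  have hγ1 : 0 < 1 - γ := sub_pos.2 hγ
  have hδ1 : 0 < 1 - δ := sub_pos.2 (hδγ.trans_lt hγ)
  set N := Fintype.card ι
  -- the minimizer of `(t + (1 - t) * δ) ^ N / t ^ ((1 - γ) * N)`
  set t := δ * (1 - γ) / (γ * (1 - δ))
  have ht0 : 0 < t := by positivity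
  have ht1 : t ≤ 1 := by rw [div_le_one (by positivity)]; nlinarith
  have hmean : t + (1 - t) * δ = δ / γ := by simp only [t]; field_simp; ring
  have hsplit : (1 - δ) / (1 - γ) * t = δ / γ := by simp only [t]; field_simp
  have hbound : (t + (1 - t) * δ) ^ N =
      2 ^ (-(N : ℝ) * binaryRelEntropy γ δ) * t ^ ((1 - γ) * N) := by
    rw [two_rpow_neg_mul_binaryRelEntropy _ hγ0 hγ hδ (hδγ.trans_lt hγ), mul_assoc,
      ← mul_rpow (by positivity) ht0.le, hsplit, ← rpow_add (by positivity), hmean,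
      ← rpow_natCast]
    congr 1
    ring
  refine le_of_mul_le_mul_right ?_ (rpow_pos_of_pos ht0 ((1 - γ) * N))
  calc _ ≤ ∑ ω, p ω * t ^ (T ω)ᶜ.card := sum_filter_mul_rpow_le hp ht0.le ht1
    _ ≤ lam * (t + (1 - t) * δ) ^ N := sum_mul_pow_card_compl_le hconj ht0.le ht1
    _ = _ := by rw [hbound, mul_assoc]

theorem sum_filter_card_le_of_conj_le (hp : ∀ ω, 0 ≤ p ω)
    (hconj : ∀ S, ∑ ω ∈ univ.filter (fun ω => S ⊆ T ω), p ω ≤ lam * δ ^ S.card)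
    (hδ : 0 < δ) (hδγ : δ ≤ γ) (hγ : γ ≤ 1) :
    ∑ ω ∈ univ.filter (fun ω => γ * Fintype.card ι ≤ (T ω).card), p ω ≤
      lam * 2 ^ (-(Fintype.card ι : ℝ) * binaryRelEntropy γ δ) := by
  rcases hγ.lt_or_eq with hγ | rfl
  · exact sum_filter_card_le_of_conj_le_of_lt_one hp hconj hδ hδγ hγ
  rw [two_rpow_neg_mul_binaryRelEntropy_one _ hδ, rpow_natCast, ← card_univ]
  refine le_trans (sum_le_sum_of_subset_of_nonneg ?_ fun ω _ _ => hp ω) (hconj univ)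
  refine monotone_filter_right _ fun ω _ hω => (eq_univ_of_card _ ?_).ge
  rw [card_univ, one_mul, Nat.cast_le] at hω
  exact (card_le_univ _).antisymm hω

end Tail

theorem stmt_12_general {Ω : Type} [Fintype Ω] (n : ℕ) (p : Ω → ℝ)
    (hp : ∀ ω, 0 ≤ p ω)
    (X : Fin n → Ω → Bool) (lam : ℝ)
    (h : ∀ S : Finset (Fin n),
      ∑ ω ∈ Finset.univ.filter (fun ω => ∀ i ∈ S, X i ω = true), p ω ≤
        lam * 2 ^ (-(S.card : ℝ)))
    (α : ℝ) (hα0 : 0 ≤ α) (hα1 : α ≤ 1 / 2) :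
    ∑ ω ∈ Finset.univ.filter (fun ω =>
        (1 / 2 + α) * n ≤ ((Finset.univ.filter (fun i => X i ω = true)).card : ℝ)),
      p ω ≤
      lam * 2 ^ (-(n : ℝ) *
        ((1 / 2 + α) * Real.logb 2 ((1 / 2 + α) / (1 / 2)) +
          (1 - (1 / 2 + α)) * Real.logb 2 ((1 - (1 / 2 + α)) / (1 - 1 / 2)))) := by
  have hconj (S : Finset (Fin n)) :
      ∑ ω ∈ univ.filter (fun ω => S ⊆ univ.filter (fun i => X i ω = true)), p ω ≤
        lam * (1 / 2) ^ S.card := by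
    simpa [subset_iff, rpow_neg, rpow_natCast] using h S
  have htail := sum_filter_card_le_of_conj_le hp hconj (γ := 1 / 2 + α) one_half_pos
    (by linarith) (by linarith)
  rwa [Fintype.card_fin] at htail

/-- Generalized Chernoff bound (Panconesi–Srinivasan / Impagliazzo–Kabanets) with
    μᵢ = 1/2: if every conjunction of the Boolean random variables X₁,…,X_n is at
    most λ times as likely as for independent fair coins, then
    Pr[Σ Xᵢ ≥ (1/2+α)n] ≤ λ·2^{−n·D(1/2+α ‖ 1/2)}. -/
theorem stmt_12 {Ω : Type} [Fintype Ω] (n : ℕ) (p : Ω → ℝ)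
    (hp : ∀ ω, 0 ≤ p ω) (hsum : ∑ ω, p ω = 1)
    (X : Fin n → Ω → Bool) (lam : ℝ) (hlam : 0 < lam)
    (h : ∀ S : Finset (Fin n),
      ∑ ω ∈ Finset.univ.filter (fun ω => ∀ i ∈ S, X i ω = true), p ω ≤
        lam * 2 ^ (-(S.card : ℝ)))
    (α : ℝ) (hα0 : 0 ≤ α) (hα1 : α ≤ 1 / 2) :
    ∑ ω ∈ Finset.univ.filter (fun ω =>
        (1 / 2 + α) * n ≤ ((Finset.univ.filter (fun i => X i ω = true)).card : ℝ)),
      p ω ≤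
      lam * 2 ^ (-(n : ℝ) *
        ((1 / 2 + α) * Real.logb 2 ((1 / 2 + α) / (1 / 2)) +
          (1 - (1 / 2 + α)) * Real.logb 2 ((1 - (1 / 2 + α)) / (1 - 1 / 2)))) :=
  stmt_12_general n p hp X lam h α hα0 hα1
end
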